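/- arXiv:2007.04264 — 4 statements merged into one kernel-verified Lean document; each statement's English description precedes it below -/
import Mathlib

section
/- Let r, P : ℂ² → ℝ be smooth. Then the determinant of the complex Hessian of the product Pr satisfies: 𝓗_{Pr} = (P²·𝓗_r + 2P·Re[H_r(L_r, L_P)] + B_P) + r·(P·Q_P + 2Re[H_P(L_r, L_P)]) + r²·𝓗_P pointwise. -/
open Complex Matrix ComplexConjugate

noncomputable section

/-- Wirtinger derivative ∂/∂z of a complex-valued function on ℂ². -/
def wzC (g : ℂ × ℂ → ℂ) (p : ℂ × ℂ) : ℂ :=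
  (fderiv ℝ g p (1, 0) - Complex.I * fderiv ℝ g p (Complex.I, 0)) / 2

/-- Wirtinger derivative ∂/∂z̄ of a complex-valued function on ℂ². -/
def wzbarC (g : ℂ × ℂ → ℂ) (p : ℂ × ℂ) : ℂ :=
  (fderiv ℝ g p (1, 0) + Complex.I * fderiv ℝ g p (Complex.I, 0)) / 2

/-- Wirtinger derivative ∂/∂w of a complex-valued function on ℂ². -/
def wwC (g : ℂ × ℂ → ℂ) (p : ℂ × ℂ) : ℂ :=
  (fderiv ℝ g p (0, 1) - Complex.I * fderiv ℝ g p (0, Complex.I)) / 2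

/-- Wirtinger derivative ∂/∂w̄ of a complex-valued function on ℂ². -/
def wwbarC (g : ℂ × ℂ → ℂ) (p : ℂ × ℂ) : ℂ :=
  (fderiv ℝ g p (0, 1) + Complex.I * fderiv ℝ g p (0, Complex.I)) / 2

/-- f_z for a real-valued function f on ℂ². -/
def wz (f : ℂ × ℂ → ℝ) : ℂ × ℂ → ℂ := wzC (fun q => (f q : ℂ))

/-- f_w for a real-valued function f on ℂ². -/
def ww (f : ℂ × ℂ → ℝ) : ℂ × ℂ → ℂ := wwC (fun q => (f q : ℂ))

/-- f_{z z̄} -/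
def hzz (f : ℂ × ℂ → ℝ) : ℂ × ℂ → ℂ := wzbarC (wz f)

/-- f_{w w̄} -/
def hww (f : ℂ × ℂ → ℝ) : ℂ × ℂ → ℂ := wwbarC (ww f)

/-- f_{z w̄} -/
def hzw (f : ℂ × ℂ → ℝ) : ℂ × ℂ → ℂ := wwbarC (wz f)

/-- The complex Hessian matrix H_f = [[f_{zz̄}, f_{zw̄}],[f_{z̄w}, f_{ww̄}]]. -/
def hessMat (f : ℂ × ℂ → ℝ) (p : ℂ × ℂ) : Matrix (Fin 2) (Fin 2) ℂ :=
  !![hzz f p, hzw f p; conj (hzw f p), hww f p]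

/-- The complex Hessian acting on vectors: H_f(V,W) = V · H_f · conj(W)ᵀ. -/
def Hform (f : ℂ × ℂ → ℝ) (p : ℂ × ℂ) (V W : ℂ × ℂ) : ℂ :=
  hzz f p * V.1 * conj W.1 + hww f p * V.2 * conj W.2
    + hzw f p * V.1 * conj W.2 + conj (hzw f p) * V.2 * conj W.1

/-- The determinant of the complex Hessian, 𝓗_f = f_{zz̄} f_{ww̄} − |f_{zw̄}|², as a real number. -/
def scrH (f : ℂ × ℂ → ℝ) (p : ℂ × ℂ) : ℝ :=
  (hzz f p * hww f p).re - ‖hzw f p‖ ^ 2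

/-- L_f = f_w ∂/∂z − f_z ∂/∂w, identified with the vector (f_w, −f_z). -/
def Lvec (f : ℂ × ℂ → ℝ) (p : ℂ × ℂ) : ℂ × ℂ := (ww f p, - wz f p)

/-- B_P = 4 Re(r_z P_z̄) Re(r_w P_w̄) − |r_z P_w̄ + r_w̄ P_z|². -/
def BP (r P : ℂ × ℂ → ℝ) (p : ℂ × ℂ) : ℝ :=
  4 * (wz r p * conj (wz P p)).re * (ww r p * conj (ww P p)).re
    - ‖wz r p * conj (ww P p) + conj (ww r p) * wz P p‖ ^ 2

/-- Q_P = r_{zz̄} P_{ww̄} + r_{ww̄} P_{zz̄} − 2 Re(r_{zw̄} P_{z̄w}). -/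
def QP (r P : ℂ × ℂ → ℝ) (p : ℂ × ℂ) : ℝ :=
  (hzz r p * hww P p + hww r p * hzz P p).re - 2 * (hzw r p * conj (hzw P p)).re

end


lemma dir_mul {f g : ℂ × ℂ → ℂ} {p : ℂ × ℂ} (hf : DifferentiableAt ℝ f p)
    (hg : DifferentiableAt ℝ g p) (v : ℂ × ℂ) :
    fderiv ℝ (fun q => f q * g q) p v = f p * fderiv ℝ g p v + g p * fderiv ℝ f p v := by
  rw [fderiv_fun_mul hf hg]
  simp [smul_eq_mul]

lemma dir_add {f g : ℂ × ℂ → ℂ} {p : ℂ × ℂ} (hf : DifferentiableAt ℝ f p)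
    (hg : DifferentiableAt ℝ g p) (v : ℂ × ℂ) :
    fderiv ℝ (fun q => f q + g q) p v = fderiv ℝ f p v + fderiv ℝ g p v := by
  rw [fderiv_fun_add hf hg]; simp

lemma fderiv_coe (f : ℂ × ℂ → ℝ) {p : ℂ × ℂ} (hf : DifferentiableAt ℝ f p) (v : ℂ × ℂ) :
    fderiv ℝ (fun q => (f q : ℂ)) p v = ((fderiv ℝ f p v : ℝ) : ℂ) := by
  have h : fderiv ℝ (fun q => (f q : ℂ)) p = Complex.ofRealCLM.comp (fderiv ℝ f p) :=
    (Complex.ofRealCLM.hasFDerivAt.comp p hf.hasFDerivAt).fderiv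
  rw [h]; rfl

lemma contDiff_coe {f : ℂ × ℂ → ℝ} (hf : ContDiff ℝ (⊤ : ℕ∞) f) :
    ContDiff ℝ (⊤ : ℕ∞) (fun q => (f q : ℂ)) :=
  Complex.ofRealCLM.contDiff.comp hf

lemma contDiff_fderiv_apply {f : ℂ × ℂ → ℂ} (hf : ContDiff ℝ (⊤ : ℕ∞) f) (v : ℂ × ℂ) :
    ContDiff ℝ (⊤ : ℕ∞) (fun q => fderiv ℝ f q v) :=
  (hf.fderiv_right (by simp)).clm_apply contDiff_const

lemma snd_deriv (f : ℂ × ℂ → ℝ) (hf : ContDiff ℝ (⊤ : ℕ∞) f) (p u v : ℂ × ℂ) :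
    fderiv ℝ (fun q => fderiv ℝ (fun x => (f x : ℂ)) q v) p u
      = ((fderiv ℝ (fderiv ℝ f) p u v : ℝ) : ℂ) := by
  have h1 : (fun q => fderiv ℝ (fun x => (f x : ℂ)) q v)
      = fun q => (Complex.ofRealCLM.comp (ContinuousLinearMap.apply ℝ ℝ v)) (fderiv ℝ f q) :=
    funext fun q => fderiv_coe f ((hf.differentiable (by simp)) q) v
  rw [h1]
  have h2 : DifferentiableAt ℝ (fderiv ℝ f) p :=
    ((hf.fderiv_right (m := (⊤ : ℕ∞)) (by simp)).differentiable (by simp)) p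
  have h3 := ((Complex.ofRealCLM.comp (ContinuousLinearMap.apply ℝ ℝ v)).hasFDerivAt.comp p
    h2.hasFDerivAt).fderiv
  rw [show (fun q => (Complex.ofRealCLM.comp (ContinuousLinearMap.apply ℝ ℝ v)) (fderiv ℝ f q))
      = (Complex.ofRealCLM.comp (ContinuousLinearMap.apply ℝ ℝ v)) ∘ (fderiv ℝ f) from rfl, h3]
  rfl

section rules
variable {f g : ℂ × ℂ → ℂ} {p : ℂ × ℂ}

lemma wzC_mul (hf : DifferentiableAt ℝ f p) (hg : DifferentiableAt ℝ g p) :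
    wzC (fun q => f q * g q) p = f p * wzC g p + g p * wzC f p := by
  unfold wzC; rw [dir_mul hf hg, dir_mul hf hg]; ring

lemma wwC_mul (hf : DifferentiableAt ℝ f p) (hg : DifferentiableAt ℝ g p) :
    wwC (fun q => f q * g q) p = f p * wwC g p + g p * wwC f p := by
  unfold wwC; rw [dir_mul hf hg, dir_mul hf hg]; ring

lemma wzbarC_mul (hf : DifferentiableAt ℝ f p) (hg : DifferentiableAt ℝ g p) :
    wzbarC (fun q => f q * g q) p = f p * wzbarC g p + g p * wzbarC f p := by
  unfold wzbarC; rw [dir_mul hf hg, dir_mul hf hg]; ring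

lemma wwbarC_mul (hf : DifferentiableAt ℝ f p) (hg : DifferentiableAt ℝ g p) :
    wwbarC (fun q => f q * g q) p = f p * wwbarC g p + g p * wwbarC f p := by
  unfold wwbarC; rw [dir_mul hf hg, dir_mul hf hg]; ring

lemma wzbarC_add (hf : DifferentiableAt ℝ f p) (hg : DifferentiableAt ℝ g p) :
    wzbarC (fun q => f q + g q) p = wzbarC f p + wzbarC g p := by
  unfold wzbarC; rw [dir_add hf hg, dir_add hf hg]; ring

lemma wwbarC_add (hf : DifferentiableAt ℝ f p) (hg : DifferentiableAt ℝ g p) :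
    wwbarC (fun q => f q + g q) p = wwbarC f p + wwbarC g p := by
  unfold wwbarC; rw [dir_add hf hg, dir_add hf hg]; ring

end rules

section coes
variable {f : ℂ × ℂ → ℝ} {p : ℂ × ℂ}

lemma wzbarC_coe (hf : DifferentiableAt ℝ f p) :
    wzbarC (fun q => (f q : ℂ)) p = conj (wz f p) := by
  unfold wzbarC wz wzC
  rw [fderiv_coe f hf, fderiv_coe f hf]
  simp [map_sub, _root_.map_mul, map_div₀, Complex.conj_I, Complex.conj_ofNat]

lemma wwbarC_coe (hf : DifferentiableAt ℝ f p) :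
    wwbarC (fun q => (f q : ℂ)) p = conj (ww f p) := by
  unfold wwbarC ww wwC
  rw [fderiv_coe f hf, fderiv_coe f hf]
  simp [map_sub, _root_.map_mul, map_div₀, Complex.conj_I, Complex.conj_ofNat]

end coes

section smoothness
variable {f : ℂ × ℂ → ℝ}

lemma contDiff_wz (hf : ContDiff ℝ (⊤ : ℕ∞) f) : ContDiff ℝ (⊤ : ℕ∞) (wz f) := by
  unfold wz wzC
  exact ((contDiff_fderiv_apply (contDiff_coe hf) (1, 0)).sub
    (contDiff_const.mul (contDiff_fderiv_apply (contDiff_coe hf) (Complex.I, 0)))).div_const 2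

lemma contDiff_ww (hf : ContDiff ℝ (⊤ : ℕ∞) f) : ContDiff ℝ (⊤ : ℕ∞) (ww f) := by
  unfold ww wwC
  exact ((contDiff_fderiv_apply (contDiff_coe hf) (0, 1)).sub
    (contDiff_const.mul (contDiff_fderiv_apply (contDiff_coe hf) (0, Complex.I)))).div_const 2

end smoothness

/-- first derivative of a product of real functions -/
lemma wz_mul (r P : ℂ × ℂ → ℝ) (hr : ContDiff ℝ (⊤ : ℕ∞) r) (hP : ContDiff ℝ (⊤ : ℕ∞) P) :
    wz (fun q => P q * r q) = fun q => (P q : ℂ) * wz r q + (r q : ℂ) * wz P q := by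
  funext q
  have : wz (fun q => P q * r q) q = wzC (fun q => ((P q : ℂ)) * ((r q : ℂ))) q := by
    unfold wz; norm_cast
  rw [this, wzC_mul ((contDiff_coe hP).differentiable (by simp) q)
    ((contDiff_coe hr).differentiable (by simp) q)]
  rfl

lemma ww_mul (r P : ℂ × ℂ → ℝ) (hr : ContDiff ℝ (⊤ : ℕ∞) r) (hP : ContDiff ℝ (⊤ : ℕ∞) P) :
    ww (fun q => P q * r q) = fun q => (P q : ℂ) * ww r q + (r q : ℂ) * ww P q := by
  funext q
  have : ww (fun q => P q * r q) q = wwC (fun q => ((P q : ℂ)) * ((r q : ℂ))) q := by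
    unfold ww; norm_cast
  rw [this, wwC_mul ((contDiff_coe hP).differentiable (by simp) q)
    ((contDiff_coe hr).differentiable (by simp) q)]
  rfl

section hess
variable (r P : ℂ × ℂ → ℝ) (p : ℂ × ℂ)

lemma hzz_mul (hr : ContDiff ℝ (⊤ : ℕ∞) r) (hP : ContDiff ℝ (⊤ : ℕ∞) P) :
    hzz (fun q => P q * r q) p = (P p : ℂ) * hzz r p + wz r p * conj (wz P p)
      + ((r p : ℂ) * hzz P p + wz P p * conj (wz r p)) := by
  have dPc : ∀ q, DifferentiableAt ℝ (fun x => ((P x : ℝ) : ℂ)) q :=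
    fun q => (contDiff_coe hP).differentiable (by simp) q
  have drc : ∀ q, DifferentiableAt ℝ (fun x => ((r x : ℝ) : ℂ)) q :=
    fun q => (contDiff_coe hr).differentiable (by simp) q
  have dwzr : ∀ q, DifferentiableAt ℝ (wz r) q := fun q => (contDiff_wz hr).differentiable (by simp) q
  have dwzP : ∀ q, DifferentiableAt ℝ (wz P) q := fun q => (contDiff_wz hP).differentiable (by simp) q
  unfold hzz
  rw [wz_mul r P hr hP,
    wzbarC_add ((dPc p).fun_mul (dwzr p)) ((drc p).fun_mul (dwzP p)),
    wzbarC_mul (dPc p) (dwzr p), wzbarC_mul (drc p) (dwzP p),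
    wzbarC_coe (hP.differentiable (by simp) p), wzbarC_coe (hr.differentiable (by simp) p)]

lemma hww_mul (hr : ContDiff ℝ (⊤ : ℕ∞) r) (hP : ContDiff ℝ (⊤ : ℕ∞) P) :
    hww (fun q => P q * r q) p = (P p : ℂ) * hww r p + ww r p * conj (ww P p)
      + ((r p : ℂ) * hww P p + ww P p * conj (ww r p)) := by
  have dPc : ∀ q, DifferentiableAt ℝ (fun x => ((P x : ℝ) : ℂ)) q :=
    fun q => (contDiff_coe hP).differentiable (by simp) q
  have drc : ∀ q, DifferentiableAt ℝ (fun x => ((r x : ℝ) : ℂ)) q :=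
    fun q => (contDiff_coe hr).differentiable (by simp) q
  have dwwr : ∀ q, DifferentiableAt ℝ (ww r) q := fun q => (contDiff_ww hr).differentiable (by simp) q
  have dwwP : ∀ q, DifferentiableAt ℝ (ww P) q := fun q => (contDiff_ww hP).differentiable (by simp) q
  unfold hww
  rw [ww_mul r P hr hP,
    wwbarC_add ((dPc p).fun_mul (dwwr p)) ((drc p).fun_mul (dwwP p)),
    wwbarC_mul (dPc p) (dwwr p), wwbarC_mul (drc p) (dwwP p),
    wwbarC_coe (hP.differentiable (by simp) p), wwbarC_coe (hr.differentiable (by simp) p)]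

lemma hzw_mul (hr : ContDiff ℝ (⊤ : ℕ∞) r) (hP : ContDiff ℝ (⊤ : ℕ∞) P) :
    hzw (fun q => P q * r q) p = (P p : ℂ) * hzw r p + wz r p * conj (ww P p)
      + ((r p : ℂ) * hzw P p + wz P p * conj (ww r p)) := by
  have dPc : ∀ q, DifferentiableAt ℝ (fun x => ((P x : ℝ) : ℂ)) q :=
    fun q => (contDiff_coe hP).differentiable (by simp) q
  have drc : ∀ q, DifferentiableAt ℝ (fun x => ((r x : ℝ) : ℂ)) q :=
    fun q => (contDiff_coe hr).differentiable (by simp) q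
  have dwzr : ∀ q, DifferentiableAt ℝ (wz r) q := fun q => (contDiff_wz hr).differentiable (by simp) q
  have dwzP : ∀ q, DifferentiableAt ℝ (wz P) q := fun q => (contDiff_wz hP).differentiable (by simp) q
  unfold hzw
  rw [wz_mul r P hr hP,
    wwbarC_add ((dPc p).fun_mul (dwzr p)) ((drc p).fun_mul (dwzP p)),
    wwbarC_mul (dPc p) (dwzr p), wwbarC_mul (drc p) (dwzP p),
    wwbarC_coe (hP.differentiable (by simp) p), wwbarC_coe (hr.differentiable (by simp) p)]

end hess

lemma fderiv_comb {A B : ℂ × ℂ → ℂ} {p : ℂ × ℂ} (hA : DifferentiableAt ℝ A p)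
    (hB : DifferentiableAt ℝ B p) (u : ℂ × ℂ) :
    fderiv ℝ (fun q => (A q - Complex.I * B q) / 2) p u
      = (fderiv ℝ A p u - Complex.I * fderiv ℝ B p u) / 2 := by
  have h := ((hA.hasFDerivAt.sub ((hB.hasFDerivAt).const_mul Complex.I)).mul_const
    ((2 : ℂ)⁻¹)).fderiv
  simp only [div_eq_mul_inv]
  rw [show (fun q => (A q - Complex.I * B q) * 2⁻¹) = fun y => (A - fun y => Complex.I * B y) y * 2⁻¹ from rfl, h]
  simp
  ring

lemma hzz_real (f : ℂ × ℂ → ℝ) (hf : ContDiff ℝ (⊤ : ℕ∞) f) (p : ℂ × ℂ) :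
    ∃ x : ℝ, hzz f p = (x : ℂ) := by
  have hg := contDiff_coe hf
  have dA : ∀ v q, DifferentiableAt ℝ (fun q => fderiv ℝ (fun x => (f x : ℂ)) q v) q :=
    fun v q => (contDiff_fderiv_apply hg v).differentiable (by simp) q
  have hwzf : wz f = fun q => ((fun q => fderiv ℝ (fun x => (f x : ℂ)) q (1, 0)) q
      - Complex.I * (fun q => fderiv ℝ (fun x => (f x : ℂ)) q (Complex.I, 0)) q) / 2 := rfl
  have key : ∀ u, fderiv ℝ (wz f) p u
      = (((fderiv ℝ (fderiv ℝ f) p u (1, 0) : ℝ) : ℂ)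
        - Complex.I * ((fderiv ℝ (fderiv ℝ f) p u (Complex.I, 0) : ℝ) : ℂ)) / 2 := by
    intro u
    rw [hwzf, fderiv_comb (dA _ p) (dA _ p) u, snd_deriv f hf, snd_deriv f hf]
  have hsym := hf.contDiffAt.isSymmSndFDerivAt (by rw [minSmoothness_of_isRCLikeNormedField]; exact WithTop.coe_le_coe.mpr le_top) (x := p)
  refine ⟨((fderiv ℝ (fderiv ℝ f) p (1, 0) (1, 0)
    + fderiv ℝ (fderiv ℝ f) p (Complex.I, 0) (Complex.I, 0)) / 4), ?_⟩
  show wzbarC (wz f) p = _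
  unfold wzbarC
  rw [key, key, hsym (1, 0) (Complex.I, 0)]
  push_cast
  linear_combination (-((fderiv ℝ (fderiv ℝ f) p (Complex.I, 0) (Complex.I, 0) : ℝ) : ℂ) / 4)
    * Complex.I_sq

lemma hww_real (f : ℂ × ℂ → ℝ) (hf : ContDiff ℝ (⊤ : ℕ∞) f) (p : ℂ × ℂ) :
    ∃ x : ℝ, hww f p = (x : ℂ) := by
  have hg := contDiff_coe hf
  have dA : ∀ v q, DifferentiableAt ℝ (fun q => fderiv ℝ (fun x => (f x : ℂ)) q v) q :=
    fun v q => (contDiff_fderiv_apply hg v).differentiable (by simp) q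
  have hwwf : ww f = fun q => ((fun q => fderiv ℝ (fun x => (f x : ℂ)) q (0, 1)) q
      - Complex.I * (fun q => fderiv ℝ (fun x => (f x : ℂ)) q (0, Complex.I)) q) / 2 := rfl
  have key : ∀ u, fderiv ℝ (ww f) p u
      = (((fderiv ℝ (fderiv ℝ f) p u (0, 1) : ℝ) : ℂ)
        - Complex.I * ((fderiv ℝ (fderiv ℝ f) p u (0, Complex.I) : ℝ) : ℂ)) / 2 := by
    intro u
    rw [hwwf, fderiv_comb (dA _ p) (dA _ p) u, snd_deriv f hf, snd_deriv f hf]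
  have hsym := hf.contDiffAt.isSymmSndFDerivAt (by rw [minSmoothness_of_isRCLikeNormedField]; exact WithTop.coe_le_coe.mpr le_top) (x := p)
  refine ⟨((fderiv ℝ (fderiv ℝ f) p (0, 1) (0, 1)
    + fderiv ℝ (fderiv ℝ f) p (0, Complex.I) (0, Complex.I)) / 4), ?_⟩
  show wwbarC (ww f) p = _
  unfold wwbarC
  rw [key, key, hsym (0, 1) (0, Complex.I)]
  push_cast
  linear_combination (-((fderiv ℝ (fderiv ℝ f) p (0, Complex.I) (0, Complex.I) : ℝ) : ℂ) / 4)
    * Complex.I_sq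

/-- the determinant of the complex Hessian of Pr. -/
theorem stmt7 (r P : ℂ × ℂ → ℝ) (hr : ContDiff ℝ (⊤ : ℕ∞) r) (hP : ContDiff ℝ (⊤ : ℕ∞) P)
    (p : ℂ × ℂ) :
    scrH (fun q => P q * r q) p =
      ((P p) ^ 2 * scrH r p + 2 * P p * (Hform r p (Lvec r p) (Lvec P p)).re + BP r P p)
        + r p * (P p * QP r P p + 2 * (Hform P p (Lvec r p) (Lvec P p)).re)
        + (r p) ^ 2 * scrH P p := by
  obtain ⟨a, ha⟩ := hzz_real r hr p
  obtain ⟨b, hb⟩ := hww_real r hr p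
  obtain ⟨A, hA⟩ := hzz_real P hP p
  obtain ⟨B, hB⟩ := hww_real P hP p
  unfold scrH BP QP Hform Lvec
  rw [hzz_mul r P p hr hP, hww_mul r P p hr hP, hzw_mul r P p hr hP, ha, hb, hA, hB]
  simp only [Complex.sq_norm, Complex.normSq_apply, Complex.mul_re, Complex.mul_im,
    Complex.add_re, Complex.add_im, Complex.sub_re, Complex.sub_im, Complex.neg_re,
    Complex.neg_im, Complex.ofReal_re, Complex.ofReal_im, Complex.conj_re, Complex.conj_im,
    Complex.conj_conj, Complex.conj_ofReal]
  ring
end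

section
/- Let r, X : ℂ² → ℝ be smooth, P = 1 + X, and suppose at a point p ∈ ℂ²: (a) the complex Hessian H_r(p) is positive semidefinite, (b) H_r(L_r, L_r)(p) = 0 where L_r = (r_w(p), −r_z(p)) ≠ 0, and (c) r(p) = 0. Then for ρ = r·(1 + Kr + X), the determinant of the complex Hessian at p satisfies 𝓗_ρ(p) = B_P(p), where B_P = 4Re(r_z P_z̄)Re(r_w P_w̄) − |r_z P_w̄ + r_w̄ P_z|². -/
open Complex Matrix ComplexConjugate
open scoped ComplexOrder

noncomputable section StmtAux

/-- Generic directional Wirtinger-type operator. -/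
def Wd (u v : ℂ × ℂ) (σ : ℂ) (g : ℂ × ℂ → ℂ) (p : ℂ × ℂ) : ℂ :=
  (fderiv ℝ g p u + σ * fderiv ℝ g p v) / 2

lemma Wd_mul {f g : ℂ × ℂ → ℂ} {p : ℂ × ℂ} (u v : ℂ × ℂ) (σ : ℂ)
    (hf : DifferentiableAt ℝ f p) (hg : DifferentiableAt ℝ g p) :
    Wd u v σ (fun q => f q * g q) p = Wd u v σ f p * g p + f p * Wd u v σ g p := by
  simp only [Wd, fderiv_fun_mul hf hg, ContinuousLinearMap.add_apply,
    ContinuousLinearMap.smul_apply, smul_eq_mul]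
  ring

lemma Wd_add {f g : ℂ × ℂ → ℂ} {p : ℂ × ℂ} (u v : ℂ × ℂ) (σ : ℂ)
    (hf : DifferentiableAt ℝ f p) (hg : DifferentiableAt ℝ g p) :
    Wd u v σ (fun q => f q + g q) p = Wd u v σ f p + Wd u v σ g p := by
  simp only [Wd, fderiv_fun_add hf hg, ContinuousLinearMap.add_apply]
  ring

lemma Wd_const_add {f : ℂ × ℂ → ℂ} {p : ℂ × ℂ} (u v : ℂ × ℂ) (σ c : ℂ) :
    Wd u v σ (fun q => c + f q) p = Wd u v σ f p := by
  simp only [Wd, fderiv_const_add]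

lemma Wd_const_mul {f : ℂ × ℂ → ℂ} {p : ℂ × ℂ} (u v : ℂ × ℂ) (σ c : ℂ)
    (hf : DifferentiableAt ℝ f p) :
    Wd u v σ (fun q => c * f q) p = c * Wd u v σ f p := by
  simp only [Wd, fderiv_const_mul hf, ContinuousLinearMap.smul_apply, smul_eq_mul]
  ring

lemma fderiv_ofReal {f : ℂ × ℂ → ℝ} {p : ℂ × ℂ} (hf : DifferentiableAt ℝ f p) (w : ℂ × ℂ) :
    fderiv ℝ (fun q => (f q : ℂ)) p w = ((fderiv ℝ f p w : ℝ) : ℂ) := by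
  have : fderiv ℝ (fun q => (f q : ℂ)) p = Complex.ofRealCLM.comp (fderiv ℝ f p) :=
    (Complex.ofRealCLM.hasFDerivAt.comp p hf.hasFDerivAt).fderiv
  rw [this]; rfl

lemma Wd_real_conj {f : ℂ × ℂ → ℝ} {p : ℂ × ℂ} (u v : ℂ × ℂ) (σ : ℂ)
    (hf : DifferentiableAt ℝ f p) :
    conj (Wd u v σ (fun q => (f q : ℂ)) p) = Wd u v (conj σ) (fun q => (f q : ℂ)) p := by
  simp only [Wd, fderiv_ofReal hf, map_div₀, map_add, _root_.map_mul, map_ofNat, Complex.conj_ofReal]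

lemma contDiff_Wd {g : ℂ × ℂ → ℂ} (u v : ℂ × ℂ) (σ : ℂ) (hg : ContDiff ℝ (⊤ : ℕ∞) g) :
    ContDiff ℝ (⊤ : ℕ∞) (Wd u v σ g) := by
  unfold Wd
  apply ContDiff.div_const
  exact ((ContinuousLinearMap.apply ℝ ℂ u).contDiff.comp (hg.fderiv_right (by simp))).add
    (contDiff_const.mul ((ContinuousLinearMap.apply ℝ ℂ v).contDiff.comp
      (hg.fderiv_right (by simp))))

lemma Wd_G {r X : ℂ × ℂ → ℝ} (hr : ContDiff ℝ (⊤ : ℕ∞) r) (hX : ContDiff ℝ (⊤ : ℕ∞) X) (K : ℝ)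
    (u v : ℂ × ℂ) (σ : ℂ) (q : ℂ × ℂ) :
    Wd u v σ (fun x => ((1 + K * r x + X x : ℝ) : ℂ)) q
      = (K : ℂ) * Wd u v σ (fun x => ((r x : ℝ) : ℂ)) q
        + Wd u v σ (fun x => ((X x : ℝ) : ℂ)) q := by
  have hFc : ContDiff ℝ (⊤ : ℕ∞) (fun x => ((r x : ℝ) : ℂ)) := Complex.ofRealCLM.contDiff.comp hr
  have hXc : ContDiff ℝ (⊤ : ℕ∞) (fun x => ((X x : ℝ) : ℂ)) := Complex.ofRealCLM.contDiff.comp hX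
  have h1 : (fun x => ((1 + K * r x + X x : ℝ) : ℂ))
      = fun x => (1 : ℂ) + ((K : ℂ) * ((r x : ℝ) : ℂ) + ((X x : ℝ) : ℂ)) := by
    funext x; push_cast; ring
  rw [h1, Wd_const_add,
    Wd_add u v σ ((hFc.differentiable (by simp) q).const_mul _) (hXc.differentiable (by simp) q),
    Wd_const_mul u v σ _ (hFc.differentiable (by simp) q)]

lemma key_second {r X : ℂ × ℂ → ℝ} (hr : ContDiff ℝ (⊤ : ℕ∞) r) (hX : ContDiff ℝ (⊤ : ℕ∞) X) (K : ℝ)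
    {p : ℂ × ℂ} (hrp : r p = 0) (u1 v1 u2 v2 : ℂ × ℂ) :
    Wd u2 v2 I (Wd u1 v1 (-I) (fun x => ((r x * (1 + K * r x + X x) : ℝ) : ℂ))) p
      = ((1 + X p : ℝ) : ℂ) * Wd u2 v2 I (Wd u1 v1 (-I) (fun x => ((r x : ℝ) : ℂ))) p
        + Wd u1 v1 (-I) (fun x => ((r x : ℝ) : ℂ)) p
            * conj ((K : ℂ) * Wd u2 v2 (-I) (fun x => ((r x : ℝ) : ℂ)) p
                + Wd u2 v2 (-I) (fun x => ((X x : ℝ) : ℂ)) p)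
        + conj (Wd u2 v2 (-I) (fun x => ((r x : ℝ) : ℂ)) p)
            * ((K : ℂ) * Wd u1 v1 (-I) (fun x => ((r x : ℝ) : ℂ)) p
                + Wd u1 v1 (-I) (fun x => ((X x : ℝ) : ℂ)) p) := by
  set Fc := fun x => ((r x : ℝ) : ℂ) with hFcdef
  set Xc := fun x => ((X x : ℝ) : ℂ) with hXcdef
  have hG : ContDiff ℝ (⊤ : ℕ∞) (fun x : ℂ × ℂ => (1 + K * r x + X x : ℝ)) :=
    (contDiff_const.add (contDiff_const.mul hr)).add hX
  have hFc : ContDiff ℝ (⊤ : ℕ∞) Fc := Complex.ofRealCLM.contDiff.comp hr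
  have hXc : ContDiff ℝ (⊤ : ℕ∞) Xc := Complex.ofRealCLM.contDiff.comp hX
  have hGc : ContDiff ℝ (⊤ : ℕ∞) (fun x => ((1 + K * r x + X x : ℝ) : ℂ)) :=
    Complex.ofRealCLM.contDiff.comp hG
  have stepA : Wd u1 v1 (-I) (fun x => ((r x * (1 + K * r x + X x) : ℝ) : ℂ))
      = fun q => Wd u1 v1 (-I) Fc q * ((1 + K * r q + X q : ℝ) : ℂ)
          + Fc q * ((K : ℂ) * Wd u1 v1 (-I) Fc q + Wd u1 v1 (-I) Xc q) := by
    funext q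
    have hprod : (fun x => ((r x * (1 + K * r x + X x) : ℝ) : ℂ))
        = fun x => Fc x * ((1 + K * r x + X x : ℝ) : ℂ) := by
      funext x; simp only [hFcdef]; push_cast; ring
    rw [hprod, Wd_mul u1 v1 (-I) (hFc.differentiable (by simp) q) (hGc.differentiable (by simp) q),
      Wd_G hr hX K]
  rw [stepA]
  have dF1 : Differentiable ℝ (Wd u1 v1 (-I) Fc) := (contDiff_Wd _ _ _ hFc).differentiable (by simp)
  have dX1 : Differentiable ℝ (Wd u1 v1 (-I) Xc) := (contDiff_Wd _ _ _ hXc).differentiable (by simp)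
  have dGc : Differentiable ℝ (fun x => ((1 + K * r x + X x : ℝ) : ℂ)) :=
    hGc.differentiable (by simp)
  have dcomb : DifferentiableAt ℝ
      (fun q => (K : ℂ) * Wd u1 v1 (-I) Fc q + Wd u1 v1 (-I) Xc q) p :=
    ((dF1 p).const_mul _).add (dX1 p)
  rw [Wd_add u2 v2 I ((dF1 p).fun_mul (dGc p)) ((hFc.differentiable (by simp) p).fun_mul dcomb),
    Wd_mul u2 v2 I (dF1 p) (dGc p),
    Wd_mul u2 v2 I (hFc.differentiable (by simp) p) dcomb]
  have hFp : Fc p = 0 := by simp [hFcdef, hrp]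
  have hGp : ((1 + K * r p + X p : ℝ) : ℂ) = ((1 + X p : ℝ) : ℂ) := by rw [hrp]; push_cast; ring
  have hGconj : Wd u2 v2 I (fun x => ((1 + K * r x + X x : ℝ) : ℂ)) p
      = conj ((K : ℂ) * Wd u2 v2 (-I) Fc p + Wd u2 v2 (-I) Xc p) := by
    rw [← Wd_G hr hX K]
    conv_lhs => rw [show (I:ℂ) = conj (-I) by simp]
    exact (Wd_real_conj u2 v2 (-I) ((hG.differentiable (by simp)) p)).symm
  have hFconj : Wd u2 v2 I Fc p = conj (Wd u2 v2 (-I) Fc p) := by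
    conv_lhs => rw [show (I:ℂ) = conj (-I) by simp]
    exact (Wd_real_conj u2 v2 (-I) ((hr.differentiable (by simp)) p)).symm
  rw [hGconj, hFconj, hFp, hGp]
  ring

lemma wz_eq (f : ℂ × ℂ → ℝ) :
    wz f = Wd (1,0) (Complex.I,0) (-Complex.I) (fun q => ((f q : ℝ) : ℂ)) := by
  funext p
  simp only [wz, wzC, Wd]
  ring

lemma ww_eq (f : ℂ × ℂ → ℝ) :
    ww f = Wd (0,1) (0,Complex.I) (-Complex.I) (fun q => ((f q : ℝ) : ℂ)) := by
  funext p
  simp only [ww, wwC, Wd]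
  ring

lemma hzz_eq (f : ℂ × ℂ → ℝ) (p : ℂ × ℂ) :
    hzz f p = Wd (1,0) (Complex.I,0) Complex.I
      (Wd (1,0) (Complex.I,0) (-Complex.I) (fun q => ((f q : ℝ) : ℂ))) p := by
  rw [hzz, wz_eq]; rfl

lemma hzw_eq (f : ℂ × ℂ → ℝ) (p : ℂ × ℂ) :
    hzw f p = Wd (0,1) (0,Complex.I) Complex.I
      (Wd (1,0) (Complex.I,0) (-Complex.I) (fun q => ((f q : ℝ) : ℂ))) p := by
  rw [hzw, wz_eq]; rfl

lemma hww_eq (f : ℂ × ℂ → ℝ) (p : ℂ × ℂ) :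
    hww f p = Wd (0,1) (0,Complex.I) Complex.I
      (Wd (0,1) (0,Complex.I) (-Complex.I) (fun q => ((f q : ℝ) : ℂ))) p := by
  rw [hww, ww_eq]; rfl

end StmtAux

/-- at a weakly pseudoconvex boundary point, 𝓗_ρ(p) = B_P(p). -/
theorem stmt13 (r X : ℂ × ℂ → ℝ) (hr : ContDiff ℝ (⊤ : ℕ∞) r) (hX : ContDiff ℝ (⊤ : ℕ∞) X)
    (p : ℂ × ℂ) (hrp : r p = 0) (hpsd : (hessMat r p).PosSemidef)
    (hLevi : Hform r p (Lvec r p) (Lvec r p) = 0) (hL : Lvec r p ≠ 0) (K : ℝ) :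
    scrH (fun q => r q * (1 + K * r q + X q)) p = BP r (fun q => 1 + X q) p := by
  -- second derivatives of ρ at p
  have hA : hzz (fun q => r q * (1 + K * r q + X q)) p
      = ((1 + X p : ℝ) : ℂ) * hzz r p
        + wz r p * conj ((K : ℂ) * wz r p + wz X p)
        + conj (wz r p) * ((K : ℂ) * wz r p + wz X p) := by
    rw [hzz_eq, key_second hr hX K hrp, ← hzz_eq, ← wz_eq, ← wz_eq]
  have hB : hzw (fun q => r q * (1 + K * r q + X q)) p
      = ((1 + X p : ℝ) : ℂ) * hzw r p
        + wz r p * conj ((K : ℂ) * ww r p + ww X p)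
        + conj (ww r p) * ((K : ℂ) * wz r p + wz X p) := by
    rw [hzw_eq, key_second hr hX K hrp, ← hzw_eq, ← wz_eq, ← wz_eq, ← ww_eq, ← ww_eq]
  have hD : hww (fun q => r q * (1 + K * r q + X q)) p
      = ((1 + X p : ℝ) : ℂ) * hww r p
        + ww r p * conj ((K : ℂ) * ww r p + ww X p)
        + conj (ww r p) * ((K : ℂ) * ww r p + ww X p) := by
    rw [hww_eq, key_second hr hX K hrp, ← hww_eq, ← ww_eq, ← ww_eq]
  -- first derivatives of P = 1 + X
  have hPz : wz (fun q => 1 + X q) p = wz X p := by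
    rw [wz_eq, wz_eq]
    have : (fun q => ((1 + X q : ℝ) : ℂ)) = fun q => (1:ℂ) + ((X q : ℝ) : ℂ) := by
      funext q; push_cast; ring
    rw [this, Wd_const_add]
  have hPw : ww (fun q => 1 + X q) p = ww X p := by
    rw [ww_eq, ww_eq]
    have : (fun q => ((1 + X q : ℝ) : ℂ)) = fun q => (1:ℂ) + ((X q : ℝ) : ℂ) := by
      funext q; push_cast; ring
    rw [this, Wd_const_add]
  -- kernel equations from positive semidefiniteness
  set u : Fin 2 → ℂ := ![conj (ww r p), -conj (wz r p)] with hu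
  have hq : star u ⬝ᵥ (hessMat r p) *ᵥ u = 0 := by
    rw [← hLevi]
    simp only [Hform, Lvec, hessMat, hu, dotProduct, Matrix.mulVec,
      Fin.sum_univ_two, Matrix.cons_val', Matrix.cons_val_zero, Matrix.cons_val_one,
      Matrix.head_cons, Matrix.empty_val', Matrix.cons_val_fin_one, Matrix.head_fin_const,
      Matrix.of_apply, Pi.star_apply, RCLike.star_def, map_neg, Complex.conj_conj]
    ring
  have hker := (hpsd.dotProduct_mulVec_zero_iff u).mp hq
  have e1 : hzz r p * conj (ww r p) = hzw r p * conj (wz r p) := by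
    have := congrFun hker 0
    simp only [hessMat, hu, Matrix.mulVec, dotProduct, Fin.sum_univ_two,
      Matrix.cons_val', Matrix.cons_val_zero, Matrix.cons_val_one, Matrix.head_cons,
      Matrix.empty_val', Matrix.cons_val_fin_one, Matrix.of_apply, Pi.zero_apply,
      Matrix.vecHead, Matrix.vecTail] at this
    linear_combination this
  have e2 : conj (hzw r p) * conj (ww r p) = hww r p * conj (wz r p) := by
    have := congrFun hker 1
    simp only [hessMat, hu, Matrix.mulVec, dotProduct, Fin.sum_univ_two,
      Matrix.cons_val', Matrix.cons_val_zero, Matrix.cons_val_one, Matrix.head_cons,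
      Matrix.empty_val', Matrix.cons_val_fin_one, Matrix.of_apply, Pi.zero_apply,
      Matrix.vecHead, Matrix.vecTail] at this
    linear_combination this
  -- hermitian diagonal entries are real
  have h11r : conj (hzz r p) = hzz r p := by
    have := hpsd.1.apply 0 0
    simpa [hessMat] using this
  have h22r : conj (hww r p) = hww r p := by
    have := hpsd.1.apply 1 1
    simpa [hessMat] using this
  -- conjugate kernel equations
  have e1b : hzz r p * ww r p = conj (hzw r p) * wz r p := by
    have := congrArg conj e1
    simpa only [_root_.map_mul, Complex.conj_conj, h11r] using this
  have e2b : hzw r p * ww r p = hww r p * wz r p := by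
    have := congrArg conj e2
    simpa only [_root_.map_mul, Complex.conj_conj, h22r] using this
  -- degenerate determinant
  have hune : wz r p ≠ 0 ∨ ww r p ≠ 0 := by
    by_contra h
    push_neg at h
    exact hL (by simp [Lvec, h.1, h.2])
  have edet : hzz r p * hww r p = hzw r p * conj (hzw r p) := by
    rcases hune with h1 | h2
    · have hc : conj (wz r p) ≠ 0 := by simpa using h1
      have : (hzz r p * hww r p - hzw r p * conj (hzw r p)) * conj (wz r p) = 0 := by
        linear_combination (conj (hzw r p)) * e1 - (hzz r p) * e2
      exact sub_eq_zero.mp ((mul_eq_zero.mp this).resolve_right hc)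
    · have hc : conj (ww r p) ≠ 0 := by simpa using h2
      have : (hzz r p * hww r p - hzw r p * conj (hzw r p)) * conj (ww r p) = 0 := by
        linear_combination (hww r p) * e1 - (hzw r p) * e2
      exact sub_eq_zero.mp ((mul_eq_zero.mp this).resolve_right hc)
  -- final algebra
  simp only [scrH, BP, hA, hB, hD, hPz, hPw]
  rw [← Complex.ofReal_inj]
  push_cast
  have reC : ∀ z : ℂ, ((z.re : ℝ) : ℂ) = (z + conj z) / 2 := by
    intro z; rw [Complex.add_conj]; push_cast; ring
  have absC : ∀ z : ℂ, ((‖z‖ : ℝ) : ℂ) ^ 2 = z * conj z := by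
    intro z
    rw [← Complex.ofReal_pow, Complex.sq_norm, Complex.mul_conj]
  simp only [reC, absC, map_add, _root_.map_mul, map_sub, map_neg, map_div₀, map_ofNat,
    Complex.conj_conj, Complex.conj_ofReal, _root_.map_one, h11r, h22r,
    Complex.ofReal_add, Complex.ofReal_one, Complex.ofReal_mul]
  linear_combination ((1 : ℂ) + (X p : ℂ))^2 * edet
    + ((1:ℂ) + (X p:ℂ)) * (conj (ww X p) + (K:ℂ) * conj (ww r p)) * e1b
    + ((1:ℂ) + (X p:ℂ)) * (ww X p + (K:ℂ) * ww r p) * e1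
    - ((1:ℂ) + (X p:ℂ)) * (conj (wz X p) + (K:ℂ) * conj (wz r p)) * e2b
    - ((1:ℂ) + (X p:ℂ)) * (wz X p + (K:ℂ) * wz r p) * e2
end

section
/- For r(z,w) = Re(w) + |w|² + Re(w)·|z|² + |z|²|w|² + |z|⁴ + |z|⁶ and any point p = (0, w₀) with r(p) = 0 and w₀ ≠ 0, one has 𝓗_r(p) = Re(w₀) + |w₀|² = 0; but for points q = (0, w) with r(q) < 0 near such p, 𝓗_r(q) = Re(w) + |w|² < 0, so r is not plurisubharmonic at q. Hence r is not plurisubharmonic on any neighborhood of any boundary point (0, w₀). -/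
open Complex Matrix ComplexConjugate

noncomputable section AuxPSH

def conjL : ℂ →L[ℝ] ℂ := Complex.conjCLE.toContinuousLinearMap

/-- the example function -/
def rr : ℂ × ℂ → ℝ := fun p : ℂ × ℂ => p.2.re + ‖p.2‖ ^ 2 + p.2.re * ‖p.1‖ ^ 2
    + ‖p.1‖ ^ 2 * ‖p.2‖ ^ 2 + ‖p.1‖ ^ 4 + ‖p.1‖ ^ 6

/-- rr written as a polynomial in z, z̄, w, w̄. -/
def rc (q : ℂ × ℂ) : ℂ := (1/2 : ℂ) * (q.2 + conj q.2) + q.2*conj q.2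
  + (1/2 : ℂ) * (q.2 + conj q.2)*(q.1*conj q.1) + (q.1*conj q.1)*(q.2*conj q.2)
  + (q.1*conj q.1)*(q.1*conj q.1) + (q.1*conj q.1)*(q.1*conj q.1)*(q.1*conj q.1)

def F1 (p : ℂ × ℂ) : ℂ := conj p.1 * ((1/2 : ℂ) * (p.2 + conj p.2) + p.2*conj p.2
    + 2*(p.1*conj p.1) + 3*(p.1*conj p.1*(p.1*conj p.1)))

def F2 (p : ℂ × ℂ) : ℂ := 1/2 + conj p.2 + (1/2 : ℂ)*(p.1*conj p.1) + (p.1*conj p.1)*conj p.2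

lemma coe_rr : (fun q : ℂ × ℂ => ((rr q : ℝ) : ℂ)) = rc := by
  funext q
  have hre : ∀ z : ℂ, ((z.re : ℝ) : ℂ) = (1/2 : ℂ) * (z + conj z) := fun z => by
    rw [Complex.add_conj]; push_cast; ring
  have e1 : rr q = q.2.re + Complex.normSq q.2 + q.2.re * Complex.normSq q.1
      + Complex.normSq q.1 * Complex.normSq q.2 + Complex.normSq q.1 ^ 2
      + Complex.normSq q.1 ^ 3 := by
    simp only [rr]
    rw [show (‖q.1‖) ^ 4 = ((‖q.1‖) ^ 2) ^ 2 by ring,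
      show (‖q.1‖) ^ 6 = ((‖q.1‖) ^ 2) ^ 3 by ring]
    simp only [Complex.sq_norm]
  rw [e1]
  push_cast
  simp only [← Complex.mul_conj, hre]
  simp only [rc]
  ring

lemma wz_rc (p : ℂ × ℂ) : wzC rc p = F1 p := by
  have hz : HasFDerivAt (fun q : ℂ × ℂ => q.1) (ContinuousLinearMap.fst ℝ ℂ ℂ) p := hasFDerivAt_fst
  have hw : HasFDerivAt (fun q : ℂ × ℂ => q.2) (ContinuousLinearMap.snd ℝ ℂ ℂ) p := hasFDerivAt_snd
  have hcz : HasFDerivAt (fun q : ℂ × ℂ => conj q.1) (conjL.comp (ContinuousLinearMap.fst ℝ ℂ ℂ)) p :=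
    conjL.hasFDerivAt.comp p hz
  have hcw : HasFDerivAt (fun q : ℂ × ℂ => conj q.2) (conjL.comp (ContinuousLinearMap.snd ℝ ℂ ℂ)) p :=
    conjL.hasFDerivAt.comp p hw
  have hA := (hw.add hcw).const_mul (1/2 : ℂ)
  have hu := hz.mul hcz
  have hv := hw.mul hcw
  have H := ((((hA.add hv).add (hA.mul hu)).add (hu.mul hv)).add (hu.mul hu)).add ((hu.mul hu).mul hu)
  have hfd : fderiv ℝ rc p = _ := H.fderiv
  unfold wzC F1
  rw [hfd]
  simp [ContinuousLinearMap.add_apply, ContinuousLinearMap.smul_apply,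
    ContinuousLinearMap.comp_apply, conjL, Complex.conj_I, smul_eq_mul]
  all_goals (ring_nf; simp only [Complex.I_sq]; ring_nf)

lemma ww_rc (p : ℂ × ℂ) : wwC rc p = F2 p := by
  have hz : HasFDerivAt (fun q : ℂ × ℂ => q.1) (ContinuousLinearMap.fst ℝ ℂ ℂ) p := hasFDerivAt_fst
  have hw : HasFDerivAt (fun q : ℂ × ℂ => q.2) (ContinuousLinearMap.snd ℝ ℂ ℂ) p := hasFDerivAt_snd
  have hcz : HasFDerivAt (fun q : ℂ × ℂ => conj q.1) (conjL.comp (ContinuousLinearMap.fst ℝ ℂ ℂ)) p :=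
    conjL.hasFDerivAt.comp p hz
  have hcw : HasFDerivAt (fun q : ℂ × ℂ => conj q.2) (conjL.comp (ContinuousLinearMap.snd ℝ ℂ ℂ)) p :=
    conjL.hasFDerivAt.comp p hw
  have hA := (hw.add hcw).const_mul (1/2 : ℂ)
  have hu := hz.mul hcz
  have hv := hw.mul hcw
  have H := ((((hA.add hv).add (hA.mul hu)).add (hu.mul hv)).add (hu.mul hu)).add ((hu.mul hu).mul hu)
  have hfd : fderiv ℝ rc p = _ := H.fderiv
  unfold wwC F2
  rw [hfd]
  simp [ContinuousLinearMap.add_apply, ContinuousLinearMap.smul_apply,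
    ContinuousLinearMap.comp_apply, conjL, Complex.conj_I, smul_eq_mul]
  all_goals (ring_nf; simp only [Complex.I_sq]; ring_nf)

lemma hzz_F1 (w : ℂ) : wzbarC F1 (0, w) = (1/2 : ℂ) * (w + conj w) + w * conj w := by
  set p : ℂ × ℂ := (0, w) with hp
  have hz : HasFDerivAt (fun q : ℂ × ℂ => q.1) (ContinuousLinearMap.fst ℝ ℂ ℂ) p := hasFDerivAt_fst
  have hw : HasFDerivAt (fun q : ℂ × ℂ => q.2) (ContinuousLinearMap.snd ℝ ℂ ℂ) p := hasFDerivAt_snd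
  have hcz : HasFDerivAt (fun q : ℂ × ℂ => conj q.1) (conjL.comp (ContinuousLinearMap.fst ℝ ℂ ℂ)) p :=
    conjL.hasFDerivAt.comp p hz
  have hcw : HasFDerivAt (fun q : ℂ × ℂ => conj q.2) (conjL.comp (ContinuousLinearMap.snd ℝ ℂ ℂ)) p :=
    conjL.hasFDerivAt.comp p hw
  have hA := (hw.add hcw).const_mul (1/2 : ℂ)
  have hu := hz.mul hcz
  have hv := hw.mul hcw
  have hG := ((hA.add hv).add (hu.const_mul (2:ℂ))).add ((hu.mul hu).const_mul (3:ℂ))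
  have H := hcz.mul hG
  have hfd : fderiv ℝ F1 p = _ := H.fderiv
  unfold wzbarC
  rw [hfd]
  simp [ContinuousLinearMap.add_apply, ContinuousLinearMap.smul_apply,
    ContinuousLinearMap.comp_apply, conjL, Complex.conj_I, smul_eq_mul, hp]
  all_goals (ring_nf; simp only [Complex.I_sq]; ring_nf)

lemma hzw_F1 (w : ℂ) : wwbarC F1 (0, w) = 0 := by
  set p : ℂ × ℂ := (0, w) with hp
  have hz : HasFDerivAt (fun q : ℂ × ℂ => q.1) (ContinuousLinearMap.fst ℝ ℂ ℂ) p := hasFDerivAt_fst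
  have hw : HasFDerivAt (fun q : ℂ × ℂ => q.2) (ContinuousLinearMap.snd ℝ ℂ ℂ) p := hasFDerivAt_snd
  have hcz : HasFDerivAt (fun q : ℂ × ℂ => conj q.1) (conjL.comp (ContinuousLinearMap.fst ℝ ℂ ℂ)) p :=
    conjL.hasFDerivAt.comp p hz
  have hcw : HasFDerivAt (fun q : ℂ × ℂ => conj q.2) (conjL.comp (ContinuousLinearMap.snd ℝ ℂ ℂ)) p :=
    conjL.hasFDerivAt.comp p hw
  have hA := (hw.add hcw).const_mul (1/2 : ℂ)
  have hu := hz.mul hcz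
  have hv := hw.mul hcw
  have hG := ((hA.add hv).add (hu.const_mul (2:ℂ))).add ((hu.mul hu).const_mul (3:ℂ))
  have H := hcz.mul hG
  have hfd : fderiv ℝ F1 p = _ := H.fderiv
  unfold wwbarC
  rw [hfd]
  simp [ContinuousLinearMap.add_apply, ContinuousLinearMap.smul_apply,
    ContinuousLinearMap.comp_apply, conjL, Complex.conj_I, smul_eq_mul, hp]

lemma hww_F2 (w : ℂ) : wwbarC F2 (0, w) = 1 := by
  set p : ℂ × ℂ := (0, w) with hp
  have hz : HasFDerivAt (fun q : ℂ × ℂ => q.1) (ContinuousLinearMap.fst ℝ ℂ ℂ) p := hasFDerivAt_fst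
  have hw : HasFDerivAt (fun q : ℂ × ℂ => q.2) (ContinuousLinearMap.snd ℝ ℂ ℂ) p := hasFDerivAt_snd
  have hcz : HasFDerivAt (fun q : ℂ × ℂ => conj q.1) (conjL.comp (ContinuousLinearMap.fst ℝ ℂ ℂ)) p :=
    conjL.hasFDerivAt.comp p hz
  have hcw : HasFDerivAt (fun q : ℂ × ℂ => conj q.2) (conjL.comp (ContinuousLinearMap.snd ℝ ℂ ℂ)) p :=
    conjL.hasFDerivAt.comp p hw
  have hu := hz.mul hcz
  have H := (((hasFDerivAt_const (1/2 : ℂ) p).add hcw).add (hu.const_mul (1/2:ℂ))).add (hu.mul hcw)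
  have hfd : fderiv ℝ F2 p = _ := H.fderiv
  unfold wwbarC
  rw [hfd]
  simp [ContinuousLinearMap.add_apply, ContinuousLinearMap.smul_apply,
    ContinuousLinearMap.comp_apply, conjL, Complex.conj_I, smul_eq_mul, hp]

lemma wz_rr : wz rr = F1 := by
  funext p
  show wzC (fun q : ℂ × ℂ => ((rr q : ℝ) : ℂ)) p = F1 p
  rw [coe_rr]; exact wz_rc p

lemma ww_rr : ww rr = F2 := by
  funext p
  show wwC (fun q : ℂ × ℂ => ((rr q : ℝ) : ℂ)) p = F2 p
  rw [coe_rr]; exact ww_rc p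

lemma hzz_rr (w : ℂ) : hzz rr (0, w) = ((w.re + ‖w‖ ^ 2 : ℝ) : ℂ) := by
  show wzbarC (wz rr) (0, w) = _
  rw [wz_rr, hzz_F1, Complex.add_conj, Complex.mul_conj, ← Complex.sq_norm]
  push_cast
  ring

lemma hzw_rr (w : ℂ) : hzw rr (0, w) = 0 := by
  show wwbarC (wz rr) (0, w) = _
  rw [wz_rr]; exact hzw_F1 w

lemma hww_rr (w : ℂ) : hww rr (0, w) = 1 := by
  show wwbarC (ww rr) (0, w) = _
  rw [ww_rr]; exact hww_F2 w

lemma scrH_rr (w : ℂ) : scrH rr (0, w) = w.re + ‖w‖ ^ 2 := by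
  unfold scrH
  rw [hzz_rr, hww_rr, hzw_rr]
  simp [← Complex.ofReal_pow]

lemma Hform_rr (w : ℂ) : (Hform rr (0, w) (1, 0) (1, 0)).re = w.re + ‖w‖ ^ 2 := by
  simp [Hform, hzz_rr, hww_rr, hzw_rr, ← Complex.ofReal_pow]

end AuxPSH

/-- the example r is not plurisubharmonic on any neighborhood of a
boundary point (0, w₀) with w₀ ≠ 0. -/
theorem stmt17 (r : ℂ × ℂ → ℝ)
    (hrdef : r = fun p : ℂ × ℂ => p.2.re + ‖p.2‖ ^ 2 + p.2.re * ‖p.1‖ ^ 2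
    + ‖p.1‖ ^ 2 * ‖p.2‖ ^ 2 + ‖p.1‖ ^ 4 + ‖p.1‖ ^ 6)
    (w₀ : ℂ) (hw₀ : w₀ ≠ 0) (hbd : r (0, w₀) = 0) :
    (scrH r (0, w₀) = w₀.re + ‖w₀‖ ^ 2 ∧ scrH r (0, w₀) = 0) ∧
      (∀ w : ℂ, r (0, w) < 0 →
        scrH r (0, w) = w.re + ‖w‖ ^ 2 ∧ scrH r (0, w) < 0) ∧
      ∀ U ∈ nhds ((0, w₀) : ℂ × ℂ),
        ¬ ∀ q ∈ U, ∀ V : ℂ × ℂ, 0 ≤ (Hform r q V V).re := by 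
  have hr : r = rr := hrdef
  subst hr
  have hb : w₀.re + ‖w₀‖ ^ 2 = 0 := by
    have := hbd
    simp [rr] at this
    linarith
  refine ⟨⟨scrH_rr w₀, by rw [scrH_rr w₀]; exact hb⟩, ?_, ?_⟩
  · intro w hw
    have hw' : w.re + ‖w‖ ^ 2 < 0 := by
      have := hw
      simp [rr] at this
      linarith
    exact ⟨scrH_rr w, by rw [scrH_rr w]; exact hw'⟩
  · intro U hU hpos
    have hA : 0 < ‖w₀‖ ^ 2 := by
      have := norm_pos_iff.mpr hw₀
      positivity
    have hc : ContinuousAt (fun t : ℝ => (((0 : ℂ), (t : ℂ) * w₀) : ℂ × ℂ)) 1 :=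
      (continuous_const.prodMk (Complex.continuous_ofReal.mul continuous_const)).continuousAt
    have h1 : (fun t : ℝ => (((0 : ℂ), (t : ℂ) * w₀) : ℂ × ℂ)) 1 = ((0 : ℂ), w₀) := by
      norm_num
    have hpre : (fun t : ℝ => (((0 : ℂ), (t : ℂ) * w₀) : ℂ × ℂ)) ⁻¹' U ∈ nhds (1 : ℝ) := by
      apply hc.preimage_mem_nhds
      have h2 : (((1:ℝ):ℂ)) * w₀ = w₀ := by norm_num
      show U ∈ nhds (((0:ℂ), ((1:ℝ):ℂ) * w₀) : ℂ × ℂ)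
      rw [h2]; exact hU
    obtain ⟨ε, hε, hball⟩ := Metric.mem_nhds_iff.1 hpre
    set t : ℝ := max (1/2) (1 - ε/2) with ht
    have ht0 : 0 < t := lt_of_lt_of_le (by norm_num) (le_max_left _ _)
    have ht1 : t < 1 := by
      apply max_lt (by norm_num)
      linarith
    have htb : t ∈ Metric.ball (1 : ℝ) ε := by
      rw [Metric.mem_ball, Real.dist_eq, abs_of_nonpos (by linarith)]
      have : 1 - ε/2 ≤ t := le_max_right _ _
      linarith
    have hq : (((0 : ℂ), (t : ℂ) * w₀) : ℂ × ℂ) ∈ U := hball htb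
    have h0 := hpos _ hq (1, 0)
    rw [Hform_rr ((t : ℂ) * w₀)] at h0
    have hre : ((t : ℂ) * w₀).re = t * w₀.re := by
      simp [Complex.mul_re]
    have habs : ‖(t : ℂ) * w₀‖ ^ 2 = t ^ 2 * ‖w₀‖ ^ 2 := by
      rw [norm_mul, Complex.norm_real, Real.norm_eq_abs, abs_of_pos ht0]
      ring
    rw [hre, habs] at h0
    have hwre : w₀.re = - (‖w₀‖ ^ 2) := by linarith
    rw [hwre] at h0
    nlinarith [mul_pos (mul_pos ht0 (sub_pos.mpr ht1)) hA]
end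

section
/- For r(z,w) = Re(w) + |w|² + Re(w)·|z|² + |z|²|w|² + |z|⁴ + |z|⁶ and P(z,w) = 1 − |z|², the product satisfies r·P = Re(w) + |w|² + |z|⁴ − |z|⁴·Re(w) − |z|⁴|w|² − |z|⁸, and its complex Hessian determinant satisfies 𝓗_{rP} = (4|z|² − 4|z|²Re(w) − 4|z|²|w|² − 16|z|⁶)·(1 − |z|⁴) − |z̄|z|² + 2z̄|z|²w|² (an explicit polynomial identity in z, z̄, w, w̄). -/
open Complex Matrix ComplexConjugate

noncomputable section Aux

/-- Conjugation as a real-linear continuous map on ℂ. -/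
def cjL : ℂ →L[ℝ] ℂ := Complex.conjCLE.toContinuousLinearMap

/-- Polynomial form of r·P in z, z̄, w, w̄. -/
def gF : ℂ × ℂ → ℂ := fun q =>
  (q.2 + conj q.2) * (1 / 2) + q.2 * conj q.2 + (q.1 * conj q.1) * (q.1 * conj q.1)
    - (q.1 * conj q.1) * (q.1 * conj q.1) * ((q.2 + conj q.2) * (1 / 2))
    - (q.1 * conj q.1) * (q.1 * conj q.1) * (q.2 * conj q.2)
    - ((q.1 * conj q.1) * (q.1 * conj q.1)) * ((q.1 * conj q.1) * (q.1 * conj q.1))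

/-- (rP)_z as a polynomial. -/
def gzF : ℂ × ℂ → ℂ := fun q =>
  2 * (q.1 * (conj q.1 * conj q.1)) - (q.1 * (conj q.1 * conj q.1)) * (q.2 + conj q.2)
    - 2 * ((q.1 * (conj q.1 * conj q.1)) * (q.2 * conj q.2))
    - 4 * ((q.1 * (q.1 * q.1)) * ((conj q.1 * conj q.1) * (conj q.1 * conj q.1)))

/-- (rP)_w as a polynomial. -/
def gwF : ℂ × ℂ → ℂ := fun q =>
  1 / 2 + conj q.2 - (q.1 * conj q.1) * (q.1 * conj q.1) * (1 / 2)
    - (q.1 * conj q.1) * (q.1 * conj q.1) * conj q.2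

lemma hzD (p : ℂ × ℂ) :
    HasFDerivAt (fun q : ℂ × ℂ => q.1) (ContinuousLinearMap.fst ℝ ℂ ℂ) p := hasFDerivAt_fst
lemma hzbD (p : ℂ × ℂ) : HasFDerivAt (fun q : ℂ × ℂ => conj q.1)
    (cjL.comp (ContinuousLinearMap.fst ℝ ℂ ℂ)) p := cjL.hasFDerivAt.comp p hasFDerivAt_fst
lemma hwD (p : ℂ × ℂ) :
    HasFDerivAt (fun q : ℂ × ℂ => q.2) (ContinuousLinearMap.snd ℝ ℂ ℂ) p := hasFDerivAt_snd
lemma hwbD (p : ℂ × ℂ) : HasFDerivAt (fun q : ℂ × ℂ => conj q.2)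
    (cjL.comp (ContinuousLinearMap.snd ℝ ℂ ℂ)) p := cjL.hasFDerivAt.comp p hasFDerivAt_snd

lemma wz_gF (p : ℂ × ℂ) : wzC gF p = gzF p := by
  have hm := (hzD p).mul (hzbD p)
  have h : HasFDerivAt gF _ p :=
    (((((((hwD p).add (hwbD p)).mul_const' (1/2)).add ((hwD p).mul (hwbD p))).add
        (hm.mul hm)).sub ((hm.mul hm).mul (((hwD p).add (hwbD p)).mul_const' (1/2)))).sub
      ((hm.mul hm).mul ((hwD p).mul (hwbD p)))).sub ((hm.mul hm).mul (hm.mul hm))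
  rw [wzC, h.fderiv, gzF]
  simp [cjL, ContinuousLinearMap.smul_apply, smul_eq_mul]
  ring_nf
  simp [Complex.I_sq]
  ring

lemma ww_gF (p : ℂ × ℂ) : wwC gF p = gwF p := by
  have hm := (hzD p).mul (hzbD p)
  have h : HasFDerivAt gF _ p :=
    (((((((hwD p).add (hwbD p)).mul_const' (1/2)).add ((hwD p).mul (hwbD p))).add
        (hm.mul hm)).sub ((hm.mul hm).mul (((hwD p).add (hwbD p)).mul_const' (1/2)))).sub
      ((hm.mul hm).mul ((hwD p).mul (hwbD p)))).sub ((hm.mul hm).mul (hm.mul hm))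
  rw [wwC, h.fderiv, gwF]
  simp [cjL, ContinuousLinearMap.smul_apply, smul_eq_mul]
  ring_nf
  simp [Complex.I_sq]
  ring

lemma hzz_gF (p : ℂ × ℂ) : wzbarC gzF p =
    4 * (p.1 * conj p.1) - 2 * (p.1 * conj p.1) * (p.2 + conj p.2)
      - 4 * (p.1 * conj p.1) * (p.2 * conj p.2) - 16 * (p.1 * conj p.1) ^ 3 := by
  have hc2 := (hzbD p).mul (hzbD p)
  have hm2 := (hzD p).mul hc2
  have h : HasFDerivAt gzF _ p :=
    (((hm2.const_mul 2).sub (hm2.mul ((hwD p).add (hwbD p)))).sub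
      ((hm2.mul ((hwD p).mul (hwbD p))).const_mul 2)).sub
      ((((hzD p).mul ((hzD p).mul (hzD p))).mul (hc2.mul hc2)).const_mul 4)
  rw [wzbarC, h.fderiv]
  simp [cjL, ContinuousLinearMap.smul_apply, smul_eq_mul]
  ring_nf
  simp [Complex.I_sq]
  ring

lemma hzw_gF (p : ℂ × ℂ) : wwbarC gzF p =
    -(conj p.1 * (p.1 * conj p.1) + 2 * (conj p.1 * (p.1 * conj p.1)) * p.2) := by
  have hc2 := (hzbD p).mul (hzbD p)
  have hm2 := (hzD p).mul hc2
  have h : HasFDerivAt gzF _ p :=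
    (((hm2.const_mul 2).sub (hm2.mul ((hwD p).add (hwbD p)))).sub
      ((hm2.mul ((hwD p).mul (hwbD p))).const_mul 2)).sub
      ((((hzD p).mul ((hzD p).mul (hzD p))).mul (hc2.mul hc2)).const_mul 4)
  rw [wwbarC, h.fderiv]
  simp [cjL, ContinuousLinearMap.smul_apply, smul_eq_mul]
  ring_nf
  simp [Complex.I_sq]
  ring

lemma hww_gF (p : ℂ × ℂ) : wwbarC gwF p = 1 - (p.1 * conj p.1) * (p.1 * conj p.1) := by
  have hm := (hzD p).mul (hzbD p)
  have h : HasFDerivAt gwF _ p :=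
    ((((hwbD p).const_add (1/2)).sub ((hm.mul hm).mul_const' (1/2))).sub
      ((hm.mul hm).mul (hwbD p)))
  rw [wwbarC, h.fderiv]
  simp [cjL, ContinuousLinearMap.smul_apply, smul_eq_mul]
  ring_nf
  simp [Complex.I_sq]
  ring

end Aux

/-- the product rP for P = 1 − |z|² and its Hessian determinant. -/
theorem stmt18 (r P : ℂ × ℂ → ℝ)
    (hrdef : r = fun p : ℂ × ℂ => p.2.re + ‖p.2‖ ^ 2 + p.2.re * ‖p.1‖ ^ 2
    + ‖p.1‖ ^ 2 * ‖p.2‖ ^ 2 + ‖p.1‖ ^ 4 + ‖p.1‖ ^ 6)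
    (hPdef : P = fun p : ℂ × ℂ => 1 - ‖p.1‖ ^ 2) :
    ∀ p : ℂ × ℂ,
      (r p * P p =
          p.2.re + ‖p.2‖ ^ 2 + ‖p.1‖ ^ 4
            - ‖p.1‖ ^ 4 * p.2.re - ‖p.1‖ ^ 4 * ‖p.2‖ ^ 2
            - ‖p.1‖ ^ 8) ∧
        scrH (fun q => r q * P q) p =
          (4 * ‖p.1‖ ^ 2 - 4 * ‖p.1‖ ^ 2 * p.2.re
              - 4 * ‖p.1‖ ^ 2 * ‖p.2‖ ^ 2
              - 16 * ‖p.1‖ ^ 6) * (1 - ‖p.1‖ ^ 4)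
            - ‖conj p.1 * (‖p.1‖ : ℂ) ^ 2
                + 2 * conj p.1 * (‖p.1‖ : ℂ) ^ 2 * p.2‖ ^ 2 := by
  subst hrdef hPdef
  -- part 1 identity, for all q
  have part1 : ∀ q : ℂ × ℂ,
      ((q.2.re + ‖q.2‖ ^ 2 + q.2.re * ‖q.1‖ ^ 2
        + ‖q.1‖ ^ 2 * ‖q.2‖ ^ 2 + ‖q.1‖ ^ 4 + ‖q.1‖ ^ 6)
        * (1 - ‖q.1‖ ^ 2) : ℝ) =
      q.2.re + ‖q.2‖ ^ 2 + ‖q.1‖ ^ 4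
        - ‖q.1‖ ^ 4 * q.2.re - ‖q.1‖ ^ 4 * ‖q.2‖ ^ 2
        - ‖q.1‖ ^ 8 := fun q => by ring
  -- the cast of rP equals gF
  have hfg : (fun q : ℂ × ℂ =>
      (((q.2.re + ‖q.2‖ ^ 2 + q.2.re * ‖q.1‖ ^ 2
        + ‖q.1‖ ^ 2 * ‖q.2‖ ^ 2 + ‖q.1‖ ^ 4 + ‖q.1‖ ^ 6)
        * (1 - ‖q.1‖ ^ 2) : ℝ) : ℂ)) = gF := by
    funext q
    have ha : ((‖q.1‖ ^ 2 : ℝ) : ℂ) = q.1 * conj q.1 := by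
      rw [Complex.sq_norm]; exact (Complex.mul_conj q.1).symm
    have hb : ((‖q.2‖ ^ 2 : ℝ) : ℂ) = q.2 * conj q.2 := by
      rw [Complex.sq_norm]; exact (Complex.mul_conj q.2).symm
    have hc : ((q.2.re : ℝ) : ℂ) = (q.2 + conj q.2) * (1 / 2) := by
      rw [Complex.add_conj]; push_cast; ring
    rw [part1 q, gF]
    push_cast [← ha, ← hb, ← hc]
    ring
  intro p
  refine ⟨part1 p, ?_⟩
  have hwzf : wz (fun q : ℂ × ℂ =>
      (q.2.re + ‖q.2‖ ^ 2 + q.2.re * ‖q.1‖ ^ 2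
        + ‖q.1‖ ^ 2 * ‖q.2‖ ^ 2 + ‖q.1‖ ^ 4 + ‖q.1‖ ^ 6)
        * (1 - ‖q.1‖ ^ 2)) = gzF := by
    funext q; rw [wz, hfg]; exact wz_gF q
  have hwwf : ww (fun q : ℂ × ℂ =>
      (q.2.re + ‖q.2‖ ^ 2 + q.2.re * ‖q.1‖ ^ 2
        + ‖q.1‖ ^ 2 * ‖q.2‖ ^ 2 + ‖q.1‖ ^ 4 + ‖q.1‖ ^ 6)
        * (1 - ‖q.1‖ ^ 2)) = gwF := by
    funext q; rw [ww, hfg]; exact ww_gF q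
  have ha : ((‖p.1‖ ^ 2 : ℝ) : ℂ) = p.1 * conj p.1 := by
    rw [Complex.sq_norm]; exact (Complex.mul_conj p.1).symm
  have hb : ((‖p.2‖ ^ 2 : ℝ) : ℂ) = p.2 * conj p.2 := by
    rw [Complex.sq_norm]; exact (Complex.mul_conj p.2).symm
  have h1 : hzz (fun q : ℂ × ℂ =>
      (q.2.re + ‖q.2‖ ^ 2 + q.2.re * ‖q.1‖ ^ 2
        + ‖q.1‖ ^ 2 * ‖q.2‖ ^ 2 + ‖q.1‖ ^ 4 + ‖q.1‖ ^ 6)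
        * (1 - ‖q.1‖ ^ 2)) p =
      ((4 * ‖p.1‖ ^ 2 - 4 * ‖p.1‖ ^ 2 * p.2.re
        - 4 * ‖p.1‖ ^ 2 * ‖p.2‖ ^ 2 - 16 * ‖p.1‖ ^ 6 : ℝ) : ℂ) := by
    rw [hzz, hwzf, hzz_gF, Complex.add_conj]
    push_cast [← ha, ← hb]
    ring
  have h2 : hww (fun q : ℂ × ℂ =>
      (q.2.re + ‖q.2‖ ^ 2 + q.2.re * ‖q.1‖ ^ 2
        + ‖q.1‖ ^ 2 * ‖q.2‖ ^ 2 + ‖q.1‖ ^ 4 + ‖q.1‖ ^ 6)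
        * (1 - ‖q.1‖ ^ 2)) p = ((1 - ‖p.1‖ ^ 4 : ℝ) : ℂ) := by
    rw [hww, hwwf, hww_gF]
    push_cast [← ha]
    ring
  have h3 : hzw (fun q : ℂ × ℂ =>
      (q.2.re + ‖q.2‖ ^ 2 + q.2.re * ‖q.1‖ ^ 2
        + ‖q.1‖ ^ 2 * ‖q.2‖ ^ 2 + ‖q.1‖ ^ 4 + ‖q.1‖ ^ 6)
        * (1 - ‖q.1‖ ^ 2)) p =
      -(conj p.1 * (‖p.1‖ : ℂ) ^ 2 + 2 * conj p.1 * (‖p.1‖ : ℂ) ^ 2 * p.2) := by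
    rw [hzw, hwzf, hzw_gF]
    push_cast [← ha]
    ring
  rw [scrH, h1, h2, h3, ← Complex.ofReal_mul, Complex.ofReal_re, norm_neg]
end
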